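/- arXiv:1807.06109 — 2 statements merged into one kernel-verified Lean document; each statement's English description precedes it below -/
import Mathlib

section
/- Let θ ∈ (1,2), Θ = 1/(2−θ), and let w_{i−2}, w_{i−1}, w_i, w_{i+1}, w_{i+2} ≥ 0 with minmod slopes as above. Then the artificial dissipation operator satisfies Δx⁴ D(w)_i ≥ (1/2)((1/Θ) w_{i+1} − 4 w_i + (1/Θ) w_{i−1}). -/
/-!
The contributions of `s_i` cancel, so
`Δx⁴ D(w)_i = w_{i+1} - 2 w_i + w_{i-1} - (Δx/2) s_{i+1} + (Δx/2) s_{i-1}`.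
A minmod value lies between `min a 0` and `max c 0` for its first and last arguments, so for
nonnegative data `Δx s_{i+1} ≤ θ (w_{i+1} - w_i) ≤ θ w_{i+1}` and
`Δx s_{i-1} ≥ θ (w_i - w_{i-1}) ≥ -θ w_{i-1}`.
Substituting these gives the bound, since `1 - θ/2 = 1/(2Θ)`.
-/

/-- The minmod limiter: the real number of smallest absolute value in the convex
hull of the three arguments. -/
noncomputable def minmod (a b c : ℝ) : ℝ :=
  if 0 < min a (min b c) then min a (min b c)
  else if max a (max b c) < 0 then max a (max b c)
  else 0

/-- The minmod slope s_j. -/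
noncomputable def slopeMM (θ Δx : ℝ) (w : ℤ → ℝ) (j : ℤ) : ℝ :=
  minmod (θ * (w (j + 1) - w j) / Δx) ((w (j + 1) - w (j - 1)) / (2 * Δx))
    (θ * (w j - w (j - 1)) / Δx)

/-- The artificial dissipation operator D(w)_i. -/
noncomputable def Dop (θ Δx : ℝ) (w : ℤ → ℝ) (i : ℤ) : ℝ :=
  (1 / Δx ^ 4) *
    ((w (i + 1) - Δx / 2 * slopeMM θ Δx w (i + 1)) - (w i + Δx / 2 * slopeMM θ Δx w i)
      - (w i - Δx / 2 * slopeMM θ Δx w i) + (w (i - 1) + Δx / 2 * slopeMM θ Δx w (i - 1)))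

lemma minmod_le_max_zero (a b c : ℝ) : minmod a b c ≤ max c 0 := by
  unfold minmod
  split_ifs with hpos hneg
  · exact le_max_of_le_left ((min_le_right _ _).trans (min_le_right _ _))
  · exact le_max_of_le_right hneg.le
  · exact le_max_right _ _

lemma min_zero_le_minmod (a b c : ℝ) : min a 0 ≤ minmod a b c := by
  unfold minmod
  split_ifs with hpos hneg
  · exact min_le_of_right_le hpos.le
  · exact min_le_of_left_le (le_max_left _ _)
  · exact min_le_right _ _

section Slope

variable {θ Δx : ℝ} {w : ℤ → ℝ} {j : ℤ}

lemma mul_slopeMM_le (hθ : 0 ≤ θ) (hΔx : 0 < Δx) (hw₀ : 0 ≤ w (j - 1)) (hw₁ : 0 ≤ w j) :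
    Δx * slopeMM θ Δx w j ≤ θ * w j := by
  rw [← le_div_iff₀' hΔx]
  refine (minmod_le_max_zero _ _ _).trans (max_le ?_ (by positivity))
  gcongr
  linarith

lemma neg_le_mul_slopeMM (hθ : 0 ≤ θ) (hΔx : 0 < Δx) (hw₁ : 0 ≤ w j) (hw₂ : 0 ≤ w (j + 1)) :
    -(θ * w j) ≤ Δx * slopeMM θ Δx w j := by
  rw [← div_le_iff₀' hΔx]
  refine le_trans (le_min ?_ ?_) (min_zero_le_minmod _ _ _)
  · gcongr
    linarith [mul_nonneg hθ hw₂]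
  · exact div_nonpos_of_nonpos_of_nonneg (by simp only [neg_nonpos]; positivity) hΔx.le

end Slope

lemma pow_four_mul_Dop (θ : ℝ) {Δx : ℝ} (hΔx : Δx ≠ 0) (w : ℤ → ℝ) (i : ℤ) :
    Δx ^ 4 * Dop θ Δx w i = w (i + 1) - 2 * w i + w (i - 1)
      - Δx * slopeMM θ Δx w (i + 1) / 2 + Δx * slopeMM θ Δx w (i - 1) / 2 := by
  unfold Dop
  field_simp
  ring

theorem stmt_4_general (θ Θ Δx : ℝ) (w : ℤ → ℝ) (i : ℤ)
    (hθ1 : 1 < θ) (hΘ : Θ = 1 / (2 - θ)) (hΔx : 0 < Δx)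
    (hw : ∀ j : ℤ, i - 2 ≤ j → j ≤ i + 2 → 0 ≤ w j) :
    Δx ^ 4 * Dop θ Δx w i ≥ (1 / 2) * ((1 / Θ) * w (i + 1) - 4 * w i + (1 / Θ) * w (i - 1)) := by
  have hθ : 0 ≤ θ := by linarith
  have hwl : 0 ≤ w (i - 1) := hw _ (by omega) (by omega)
  have hwi : 0 ≤ w i := hw _ (by omega) (by omega)
  have hwr : 0 ≤ w (i + 1) := hw _ (by omega) (by omega)
  have hsr : Δx * slopeMM θ Δx w (i + 1) ≤ θ * w (i + 1) :=
    mul_slopeMM_le hθ hΔx (by rwa [add_sub_cancel_right]) hwr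
  have hsl : -(θ * w (i - 1)) ≤ Δx * slopeMM θ Δx w (i - 1) :=
    neg_le_mul_slopeMM hθ hΔx hwl (by rwa [sub_add_cancel])
  rw [pow_four_mul_Dop θ hΔx.ne', hΘ, one_div_one_div]
  linarith

/-- full lower bound on the minmod-limited artificial dissipation operator:
Δx⁴ D(w)_i ≥ (1/2)((1/Θ) w_{i+1} − 4 w_i + (1/Θ) w_{i−1}) with Θ = 1/(2−θ). -/
theorem stmt_4 (θ Θ Δx : ℝ) (w : ℤ → ℝ) (i : ℤ)
    (hθ1 : 1 < θ) (hθ2 : θ < 2) (hΘ : Θ = 1 / (2 - θ)) (hΔx : 0 < Δx)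
    (hw : ∀ j : ℤ, i - 2 ≤ j → j ≤ i + 2 → 0 ≤ w j) :
    Δx ^ 4 * Dop θ Δx w i ≥ (1 / 2) * ((1 / Θ) * w (i + 1) - 4 * w i + (1 / Θ) * w (i - 1)) :=
  stmt_4_general θ Θ Δx w i hθ1 hΘ hΔx hw
end

section
/- Let γ_max = ε²/(ε² + σ_s^min Δt) with ε, σ_s^min, Δt > 0, and suppose Δt ≤ max(Δt_hyp, Δt_par) where Δt_hyp = 2(√(9/8+Θ²) − Θ) ε ΔxΔy(Δx+Δy)/(4Δx²+ΔxΔy+4Δy²) and Δt_par = σ_s^min Δx²Δy²/((2+Θ²)Δx²+(1/2+2Θ²)ΔxΔy+(2+Θ²)Δy²), with Θ > 0 and Δx, Δy > 0. Then 1 − γ_max(2ΘΔt/(εΔx) + 2ΘΔt/(εΔy) + 2Δt²/(ε²Δx²) + Δt²/(2ε²ΔxΔy) + 2Δt²/(ε²Δy²)) ≥ 0. -/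
/-!
Clearing denominators, (C7) says `4ΘεΔt·P + Δt²·K ≤ 2M(ε² + σ Δt)` with
`P = ΔxΔy(Δx+Δy)`, `K = 4Δx² + ΔxΔy + 4Δy²`, `M = Δx²Δy²`.

* Parabolic bound: completing the square in `ε` gives
  `2Mε² - 4ΘεΔt·P ≥ -2Θ²Δt²(Δx+Δy)²`, and `K + 2Θ²(Δx+Δy)²` is twice the denominator of
  `Δt_par`, so `Δt ≤ Δt_par` is exactly what is left.
* Hyperbolic bound: drop `σ Δt`. The left side is increasing in `Δt ≥ 0`, and at `Δt_hyp` it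
  equals `(9/2)ε²P²/K` because `(√(9/8+Θ²) - Θ)(√(9/8+Θ²) + Θ) = 9/8`; this is at most `2Mε²`
  since `9(Δx+Δy)² ≤ 4K`.
-/

open Real

noncomputable def hyperbolicTimeStep (ε Θ Δx Δy : ℝ) : ℝ :=
  2 * (√(9 / 8 + Θ ^ 2) - Θ) * ε *
    (Δx * Δy * (Δx + Δy) / (4 * Δx ^ 2 + Δx * Δy + 4 * Δy ^ 2))

noncomputable def parabolicTimeStep (σsmin Θ Δx Δy : ℝ) : ℝ :=
  σsmin * (Δx ^ 2 * Δy ^ 2 /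
    ((2 + Θ ^ 2) * Δx ^ 2 + (1 / 2 + 2 * Θ ^ 2) * (Δx * Δy) + (2 + Θ ^ 2) * Δy ^ 2))

lemma nine_mul_add_sq_le (x y : ℝ) :
    9 * (x + y) ^ 2 ≤ 4 * (4 * x ^ 2 + x * y + 4 * y ^ 2) := by
  nlinarith [sq_nonneg (x - y)]

section

variable {ε σsmin Δx Δy Θ Δt : ℝ}

lemma condC7_iff (hε : 0 < ε) (hσ : 0 ≤ σsmin) (hΔx : 0 < Δx) (hΔy : 0 < Δy)
    (hΔt0 : 0 ≤ Δt) :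
    1 - ε ^ 2 / (ε ^ 2 + σsmin * Δt) *
        (2 * Θ * Δt / (ε * Δx) + 2 * Θ * Δt / (ε * Δy) + 2 * Δt ^ 2 / (ε ^ 2 * Δx ^ 2)
          + Δt ^ 2 / (2 * ε ^ 2 * Δx * Δy) + 2 * Δt ^ 2 / (ε ^ 2 * Δy ^ 2)) ≥ 0 ↔
      4 * Θ * ε * Δt * (Δx * Δy * (Δx + Δy)) + Δt ^ 2 * (4 * Δx ^ 2 + Δx * Δy + 4 * Δy ^ 2)
        ≤ 2 * (Δx ^ 2 * Δy ^ 2) * (ε ^ 2 + σsmin * Δt) := by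
  have hden : 0 < ε ^ 2 + σsmin * Δt := by positivity
  have hsum : ε ^ 2 * (2 * Θ * Δt / (ε * Δx) + 2 * Θ * Δt / (ε * Δy)
        + 2 * Δt ^ 2 / (ε ^ 2 * Δx ^ 2) + Δt ^ 2 / (2 * ε ^ 2 * Δx * Δy)
        + 2 * Δt ^ 2 / (ε ^ 2 * Δy ^ 2))
      = (4 * Θ * ε * Δt * (Δx * Δy * (Δx + Δy))
          + Δt ^ 2 * (4 * Δx ^ 2 + Δx * Δy + 4 * Δy ^ 2)) / (2 * (Δx ^ 2 * Δy ^ 2)) := by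
    field_simp
    ring
  rw [ge_iff_le, sub_nonneg, div_mul_eq_mul_div, div_le_one hden, hsum,
    div_le_iff₀ (by positivity), mul_comm (ε ^ 2 + σsmin * Δt)]

lemma condC7_poly_of_le_parabolicTimeStep (hΔx : 0 < Δx) (hΔy : 0 < Δy) (hΔt0 : 0 ≤ Δt)
    (h : Δt ≤ parabolicTimeStep σsmin Θ Δx Δy) :
    4 * Θ * ε * Δt * (Δx * Δy * (Δx + Δy)) + Δt ^ 2 * (4 * Δx ^ 2 + Δx * Δy + 4 * Δy ^ 2)
      ≤ 2 * (Δx ^ 2 * Δy ^ 2) * (ε ^ 2 + σsmin * Δt) := by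
  have hstep : Δt * ((2 + Θ ^ 2) * Δx ^ 2 + (1 / 2 + 2 * Θ ^ 2) * (Δx * Δy)
      + (2 + Θ ^ 2) * Δy ^ 2) ≤ σsmin * (Δx ^ 2 * Δy ^ 2) := by
    rwa [parabolicTimeStep, mul_div_assoc', le_div_iff₀ (by positivity)] at h
  have hsquare : 0 ≤ (ε * (Δx * Δy) - Θ * Δt * (Δx + Δy)) ^ 2 := sq_nonneg _
  linear_combination 2 * hsquare + 2 * mul_le_mul_of_nonneg_left hstep hΔt0

lemma condC7_poly_of_le_hyperbolicTimeStep (hε : 0 ≤ ε) (hσ : 0 ≤ σsmin) (hΘ : 0 ≤ Θ)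
    (hΔx : 0 < Δx) (hΔy : 0 < Δy) (hΔt0 : 0 ≤ Δt) (h : Δt ≤ hyperbolicTimeStep ε Θ Δx Δy) :
    4 * Θ * ε * Δt * (Δx * Δy * (Δx + Δy)) + Δt ^ 2 * (4 * Δx ^ 2 + Δx * Δy + 4 * Δy ^ 2)
      ≤ 2 * (Δx ^ 2 * Δy ^ 2) * (ε ^ 2 + σsmin * Δt) := by
  set P := Δx * Δy * (Δx + Δy)
  set K := 4 * Δx ^ 2 + Δx * Δy + 4 * Δy ^ 2
  set r := hyperbolicTimeStep ε Θ Δx Δy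
  set s := √(9 / 8 + Θ ^ 2)
  have hK : 0 < K := by positivity
  have hs : s ^ 2 = 9 / 8 + Θ ^ 2 := sq_sqrt (by positivity)
  have hmono : 4 * Θ * ε * Δt * P + Δt ^ 2 * K ≤ 4 * Θ * ε * r * P + r ^ 2 * K := by
    have hcoef : 0 ≤ 4 * Θ * ε := by positivity
    gcongr
  have hrK : r * K = 2 * (s - Θ) * ε * P := by
    rw [show r = 2 * (s - Θ) * ε * (P / K) from rfl, mul_assoc, div_mul_cancel₀ _ hK.ne']
  have hvalue : (4 * Θ * ε * r * P + r ^ 2 * K) * K = 9 / 2 * ε ^ 2 * P ^ 2 := by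
    linear_combination (4 * Θ * ε * P + r * K + 2 * (s - Θ) * ε * P) * hrK + 4 * ε ^ 2 * P ^ 2 * hs
  have hgeom : 9 / 2 * ε ^ 2 * P ^ 2 ≤ 2 * (Δx ^ 2 * Δy ^ 2) * ε ^ 2 * K := by
    linear_combination mul_le_mul_of_nonneg_left (nine_mul_add_sq_le Δx Δy)
      (by positivity : 0 ≤ ε ^ 2 * (Δx * Δy) ^ 2 / 2)
  have hdrop : 4 * Θ * ε * r * P + r ^ 2 * K ≤ 2 * (Δx ^ 2 * Δy ^ 2) * ε ^ 2 :=
    le_of_mul_le_mul_right (hvalue ▸ hgeom) hK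
  calc 4 * Θ * ε * Δt * P + Δt ^ 2 * K ≤ 4 * Θ * ε * r * P + r ^ 2 * K := hmono
    _ ≤ 2 * (Δx ^ 2 * Δy ^ 2) * ε ^ 2 := hdrop
    _ ≤ 2 * (Δx ^ 2 * Δy ^ 2) * (ε ^ 2 + σsmin * Δt) := by
      gcongr
      exact le_add_of_nonneg_right (mul_nonneg hσ hΔt0)

end

/-- Lemma 4.2 in full: condition (C7) holds whenever
Δt ≤ max(Δt_hyp, Δt_par). -/
theorem stmt_18 (ε σsmin Δx Δy Θ Δt : ℝ)
    (hε : 0 < ε) (hσ : 0 < σsmin) (hΔx : 0 < Δx) (hΔy : 0 < Δy) (hΘ : 0 < Θ)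
    (hΔt0 : 0 < Δt)
    (hΔt : Δt ≤ max
      (2 * (Real.sqrt (9 / 8 + Θ ^ 2) - Θ) * ε *
        (Δx * Δy * (Δx + Δy) / (4 * Δx ^ 2 + Δx * Δy + 4 * Δy ^ 2)))
      (σsmin * (Δx ^ 2 * Δy ^ 2 /
        ((2 + Θ ^ 2) * Δx ^ 2 + (1 / 2 + 2 * Θ ^ 2) * (Δx * Δy) + (2 + Θ ^ 2) * Δy ^ 2)))) :
    1 - ε ^ 2 / (ε ^ 2 + σsmin * Δt) *
        (2 * Θ * Δt / (ε * Δx) + 2 * Θ * Δt / (ε * Δy) + 2 * Δt ^ 2 / (ε ^ 2 * Δx ^ 2)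
          + Δt ^ 2 / (2 * ε ^ 2 * Δx * Δy) + 2 * Δt ^ 2 / (ε ^ 2 * Δy ^ 2)) ≥ 0 := by
  rw [condC7_iff hε hσ.le hΔx hΔy hΔt0.le]
  rcases le_max_iff.mp hΔt with hhyp | hpar
  · exact condC7_poly_of_le_hyperbolicTimeStep hε.le hσ.le hΘ.le hΔx hΔy hΔt0.le hhyp
  · exact condC7_poly_of_le_parabolicTimeStep hΔx hΔy hΔt0.le hpar
end
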